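/- Assume the SpaceSaving guarantees with table size K ≥ 6 on a stream of length N with sorted frequency function f, and assume additionally that there are reals C > 0 and α > 1 with f(i) ≤ C/i^α for every i ∈ {1,…,n} (a Zipf-type tail bound). Then the minimum counter satisfies c_K ≤ 6^α · C / ((α − 1)·K^α). -/

import Mathlib

/-!
The `i`-th largest counter dominates the `i`-th largest frequency. Hence, with `m = ⌊K/2⌋`, the
first `m` counters absorb the `m` largest frequencies, and the remaining `K - m` counters, each at
least `c K`, carry at most the tail mass `∑_{i>m} f i ≤ C m^(1-α)/(α-1)`, bounded by comparison
with `∫_m^∞ x^(-α) dx`. Finally `K ≤ 6 (K - m)` and `K ≤ 6 m`.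
-/

open Finset

theorem sum_Ioc_rpow_neg_le {α : ℝ} (hα : 1 < α) {m : ℕ} (hm : 1 ≤ m) (n : ℕ) :
    ∑ i ∈ Ioc m n, (i : ℝ) ^ (-α) ≤ (m : ℝ) ^ (1 - α) / (α - 1) := by
  have hα' : 0 < α - 1 := by linarith
  rcases lt_or_ge n m with hnm | hmn
  · rw [Ioc_eq_empty_of_le hnm.le, sum_empty]
    positivity
  have hm' : (1 : ℝ) ≤ m := by exact_mod_cast hm
  have hanti : AntitoneOn (fun x : ℝ ↦ x ^ (-α)) (Set.Icc (m : ℝ) n) :=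
    (Real.antitoneOn_rpow_Ioi_of_exponent_nonpos (by linarith)).mono
      fun x hx ↦ lt_of_lt_of_le one_pos (hm'.trans hx.1)
  have hzero : (0 : ℝ) ∉ Set.uIcc (m : ℝ) n := by
    rw [Set.uIcc_of_le (by exact_mod_cast hmn)]
    exact fun h ↦ by linarith [h.1]
  calc ∑ i ∈ Ioc m n, (i : ℝ) ^ (-α)
      = ∑ i ∈ Ico m n, ((i + 1 : ℕ) : ℝ) ^ (-α) := by
        rw [← Ico_add_one_add_one_eq_Ioc, ← sum_Ico_add' (fun i : ℕ ↦ (i : ℝ) ^ (-α))]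
    _ ≤ ∫ x in (m : ℝ)..n, x ^ (-α) := hanti.sum_le_integral_Ico hmn
    _ = ((m : ℝ) ^ (1 - α) - (n : ℝ) ^ (1 - α)) / (α - 1) := by
        rw [integral_rpow (Or.inr ⟨by linarith, hzero⟩), neg_add_eq_sub, ← neg_sub α 1,
          div_neg, ← neg_div, neg_sub]
    _ ≤ (m : ℝ) ^ (1 - α) / (α - 1) := by
        gcongr
        exact sub_le_self _ (by positivity)

theorem sum_Ioc_le_of_le_div_rpow {α C : ℝ} (hα : 1 < α) (hC : 0 ≤ C) {m n : ℕ} (hm : 1 ≤ m)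
    {g : ℕ → ℝ} (hg : ∀ i ∈ Ioc m n, g i ≤ C / (i : ℝ) ^ α) :
    ∑ i ∈ Ioc m n, g i ≤ C * (m : ℝ) ^ (1 - α) / (α - 1) :=
  calc ∑ i ∈ Ioc m n, g i ≤ ∑ i ∈ Ioc m n, C * (i : ℝ) ^ (-α) :=
        sum_le_sum fun i hi ↦ by rw [Real.rpow_neg (Nat.cast_nonneg i)]; exact hg i hi
    _ ≤ C * ((m : ℝ) ^ (1 - α) / (α - 1)) := by
        rw [← mul_sum]; exact mul_le_mul_of_nonneg_left (sum_Ioc_rpow_neg_le hα hm n) hC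
    _ = C * (m : ℝ) ^ (1 - α) / (α - 1) := mul_div_assoc' ..

theorem rpow_le_rpow_mul_mul_rpow_sub_one {x y z b α : ℝ} (hx : 0 < x) (hb : 0 < b) (hα : 1 ≤ α)
    (hy : x ≤ b * y) (hz : x ≤ b * z) : x ^ α ≤ b ^ α * (y * z ^ (α - 1)) := by
  have hsplit : ∀ t : ℝ, 0 < t → t ^ α = t * t ^ (α - 1) := fun t ht ↦ by
    rw [← Real.rpow_one_add' ht.le (by linarith), add_sub_cancel]
  calc x ^ α = x * x ^ (α - 1) := hsplit x hx
    _ ≤ (b * y) * (b * z) ^ (α - 1) := by gcongr; linarith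
    _ = b ^ α * (y * z ^ (α - 1)) := by
        rw [Real.mul_rpow hb.le (pos_of_mul_pos_right (hx.trans_le hz) hb.le).le, hsplit b hb]
        ring

theorem freq_le_counter {n K : ℕ} {f c σ : ℕ → ℕ}
    (hf : AntitoneOn f (Icc 1 n)) (hc : AntitoneOn c (Icc 1 K)) (hKn : K ≤ n)
    (hup : ∀ j ∈ Icc 1 K, f (σ j) ≤ c j)
    (hout : ∀ i ∈ Icc 1 n, (∀ j ∈ Icc 1 K, σ j ≠ i) → f i ≤ c K) :
    ∀ i ∈ Icc 1 K, f i ≤ c i := by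
  intro i hi
  by_contra! hlt
  obtain ⟨hi1, hiK⟩ := mem_Icc.1 hi
  have hKmem : K ∈ Icc 1 K := mem_Icc.2 ⟨hi1.trans hiK, le_rfl⟩
  have hin : i ∈ Icc 1 n := mem_Icc.2 ⟨hi1, hiK.trans hKn⟩
  -- Every `t ≤ i` has `f t ≥ f i > c i ≥ c K`, so it is tracked by a counter `j < i`.
  have hsurj : Set.SurjOn σ (Icc 1 (i - 1)) (Icc 1 i) := by
    intro t ht
    obtain ⟨ht1, hti⟩ := mem_Icc.1 ht
    have htn : t ∈ Icc 1 n := mem_Icc.2 ⟨ht1, hti.trans (hiK.trans hKn)⟩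
    have hft : f i ≤ f t := hf htn hin hti
    obtain ⟨j, hj, rfl⟩ : ∃ j ∈ Icc 1 K, σ j = t := by
      by_contra! hno
      linarith [hout t htn hno, hc hi hKmem hiK]
    have hji : j < i := by
      by_contra! hij
      linarith [hc hi hj hij, hup j hj]
    exact ⟨j, mem_Icc.2 ⟨(mem_Icc.1 hj).1, by omega⟩, rfl⟩
  have hcard := card_le_card_of_surjOn σ hsurj
  simp only [Nat.card_Icc] at hcard
  omega

theorem sub_mul_le_sum_Ioc_of_sum_eq {n K m : ℕ} {f c : ℕ → ℕ} (hc : AntitoneOn c (Icc 1 K))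
    (hmK : m ≤ K) (hmn : m ≤ n) (hdom : ∀ i ∈ Icc 1 m, f i ≤ c i)
    (hsum : ∑ i ∈ Icc 1 n, f i = ∑ j ∈ Icc 1 K, c j) :
    (K - m) * c K ≤ ∑ i ∈ Ioc m n, f i := by
  have hIcc : ∀ b : ℕ, Icc 1 b = Ioc 0 b := Icc_add_one_left_eq_Ioc 0
  have hhead : ∑ i ∈ Ioc 0 m, f i ≤ ∑ j ∈ Ioc 0 m, c j := by
    rw [← hIcc]; exact sum_le_sum hdom
  have htail : (K - m) * c K ≤ ∑ j ∈ Ioc m K, c j := by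
    rw [← Nat.card_Ioc, ← smul_eq_mul, ← sum_const]
    refine sum_le_sum fun j hj ↦ ?_
    obtain ⟨hmj, hjK⟩ := mem_Ioc.1 hj
    exact hc (mem_Icc.2 ⟨by omega, hjK⟩) (mem_Icc.2 ⟨by omega, le_rfl⟩) hjK
  rw [hIcc, hIcc, ← sum_Ioc_consecutive _ (Nat.zero_le m) hmn,
    ← sum_Ioc_consecutive _ (Nat.zero_le m) hmK] at hsum
  omega

theorem stmt10_general
    (n K N : ℕ) (f c σ : ℕ → ℕ)
    (hfmono : ∀ i ∈ Finset.Icc 1 n, ∀ j ∈ Finset.Icc 1 n, i ≤ j → f j ≤ f i)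
    (hfsum : ∑ i ∈ Finset.Icc 1 n, f i = N)
    (hcmono : ∀ i ∈ Finset.Icc 1 K, ∀ j ∈ Finset.Icc 1 K, i ≤ j → c j ≤ c i)
    (hcsum : ∑ j ∈ Finset.Icc 1 K, c j = N)
    (hσmem : ∀ j ∈ Finset.Icc 1 K, σ j ∈ Finset.Icc 1 n)
    (hσinj : ∀ j ∈ Finset.Icc 1 K, ∀ j' ∈ Finset.Icc 1 K, σ j = σ j' → j = j')
    (hup : ∀ j ∈ Finset.Icc 1 K, f (σ j) ≤ c j)
    (hout : ∀ i ∈ Finset.Icc 1 n, (∀ j ∈ Finset.Icc 1 K, σ j ≠ i) → f i ≤ c K)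
    (hK6 : 6 ≤ K)
    (C α : ℝ) (hC : 0 < C) (hα : 1 < α)
    (hzipf : ∀ i ∈ Finset.Icc 1 n, (f i : ℝ) ≤ C / (i : ℝ) ^ α) :
    (c K : ℝ) ≤ (6 : ℝ) ^ α * C / ((α - 1) * (K : ℝ) ^ α) := by
  have hKn : K ≤ n := by
    simpa using card_le_card_of_injOn σ hσmem fun j hj j' hj' ↦ hσinj j hj j' hj'
  have hdom := freq_le_counter hfmono hcmono hKn hup hout
  set m := K / 2
  have hm : 1 ≤ m := by omega
  have htail_nat : (K - m) * c K ≤ ∑ i ∈ Ioc m n, f i :=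
    sub_mul_le_sum_Ioc_of_sum_eq hcmono (by omega) (by omega)
      (fun i hi ↦ hdom i (Icc_subset_Icc_right (by omega) hi)) (hfsum.trans hcsum.symm)
  have htail : ((K - m : ℕ) : ℝ) * c K ≤ C * (m : ℝ) ^ (1 - α) / (α - 1) :=
    calc ((K - m : ℕ) : ℝ) * c K ≤ ∑ i ∈ Ioc m n, (f i : ℝ) := by exact_mod_cast htail_nat
      _ ≤ C * (m : ℝ) ^ (1 - α) / (α - 1) := sum_Ioc_le_of_le_div_rpow hα hC.le hm
          fun i hi ↦ hzipf i (Ioc_subset_Icc_self.trans (Icc_subset_Icc_left hm) hi)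
  have hpow : (K : ℝ) ^ α ≤ 6 ^ α * ((K - m : ℕ) * (m : ℝ) ^ (α - 1)) :=
    rpow_le_rpow_mul_mul_rpow_sub_one (by positivity) (by norm_num) hα.le
      (by exact_mod_cast (by omega : K ≤ 6 * (K - m))) (by exact_mod_cast (by omega : K ≤ 6 * m))
  rw [le_div_iff₀ (by positivity)]
  calc (c K : ℝ) * ((α - 1) * (K : ℝ) ^ α)
      ≤ (c K : ℝ) * ((α - 1) * (6 ^ α * ((K - m : ℕ) * (m : ℝ) ^ (α - 1)))) := by gcongr
    _ = (((K - m : ℕ) : ℝ) * c K) * ((α - 1) * 6 ^ α * (m : ℝ) ^ (α - 1)) := by ring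
    _ ≤ (C * (m : ℝ) ^ (1 - α) / (α - 1)) * ((α - 1) * 6 ^ α * (m : ℝ) ^ (α - 1)) := by gcongr
    _ = 6 ^ α * C * ((m : ℝ) ^ (1 - α) * (m : ℝ) ^ (α - 1)) := by field_simp [(sub_pos.2 hα).ne']
    _ = 6 ^ α * C := by rw [← Real.rpow_add (Nat.cast_pos.2 hm)]; simp

/-- Zipf tail: under the SpaceSaving guarantees with `K ≥ 6`,
if there are reals `C > 0` and `α > 1` with `f i ≤ C / i^α` for all
`i ∈ {1,…,n}`, then `c K ≤ 6^α · C / ((α-1) · K^α)`. -/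
theorem stmt10
    (n K N : ℕ) (f c σ : ℕ → ℕ)
    (hfmono : ∀ i ∈ Finset.Icc 1 n, ∀ j ∈ Finset.Icc 1 n, i ≤ j → f j ≤ f i)
    (hfsum : ∑ i ∈ Finset.Icc 1 n, f i = N)
    (hcmono : ∀ i ∈ Finset.Icc 1 K, ∀ j ∈ Finset.Icc 1 K, i ≤ j → c j ≤ c i)
    (hcsum : ∑ j ∈ Finset.Icc 1 K, c j = N)
    (hσmem : ∀ j ∈ Finset.Icc 1 K, σ j ∈ Finset.Icc 1 n)
    (hσinj : ∀ j ∈ Finset.Icc 1 K, ∀ j' ∈ Finset.Icc 1 K, σ j = σ j' → j = j')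
    (hlow : ∀ j ∈ Finset.Icc 1 K, c j ≤ f (σ j) + c K)
    (hup : ∀ j ∈ Finset.Icc 1 K, f (σ j) ≤ c j)
    (hout : ∀ i ∈ Finset.Icc 1 n, (∀ j ∈ Finset.Icc 1 K, σ j ≠ i) → f i ≤ c K)
    (hK6 : 6 ≤ K)
    (C α : ℝ) (hC : 0 < C) (hα : 1 < α)
    (hzipf : ∀ i ∈ Finset.Icc 1 n, (f i : ℝ) ≤ C / (i : ℝ) ^ α) :
    (c K : ℝ) ≤ (6 : ℝ) ^ α * C / ((α - 1) * (K : ℝ) ^ α) :=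
  stmt10_general n K N f c σ hfmono hfsum hcmono hcsum hσmem hσinj hup hout hK6 C α hC hα hzipf
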